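/- arXiv:1201.2338 — 4 statements merged into one kernel-verified Lean document; each statement's English description precedes it below -/
import Mathlib

section
/- Let $G$ be a group and $H \trianglelefteq G$ a finite normal subgroup such that the quotient $G/H$ is the internal direct product $\langle \overline{g_1} \rangle \times \cdots \times \langle \overline{g_r} \rangle \cong \mathbb{Z}^{\oplus r}$ for some $r \ge 1$ and elements $g_i \in G$ (where $\overline{g_i}$ denotes the image of $g_i$ in $G/H$). Then there is an integer $s > 0$ such that the subgroup $G_1 := \langle g_1^s, \dots, g_r^s \rangle$ of $G$ is the internal direct product $\langle g_1^s \rangle \times \cdots \times \langle g_r^s \rangle \cong \mathbb{Z}^{\oplus r}$, $G_1$ has finite index in $G$, and the quotient map $\gamma : G \to G/H$ restricts to an isomorphism from $G_1$ onto a finite-index subgroup of $G/H$. -/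
/-!
Put `s = |Aut H| · |H|`. Every `x ^ s` is central in `G`: `a = x ^ |Aut H|` centralizes `H`, so
conjugating `a` multiplies it by an element of `H` (the quotient is abelian) commuting with `a`,
and the `|H|`-th power kills that factor. So the `gᵢ ^ s` generate a commutative subgroup `G₁` on
which `v ↦ ∏ (gᵢ ^ s) ^ vᵢ` is a homomorphism from `ℤ^r` onto `G₁`. Its composite with `G → G ⧸ H`
is `v ↦ ∏ γ(gᵢ) ^ (s vᵢ)`, injective by the basis hypothesis, with image containing all `s`-th
powers of the finitely generated abelian group `G ⧸ H`, hence of finite index; finite index lifts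
back to `G` because `H` is finite.
-/

open Subgroup Pointwise

section Index

variable {G G' : Type*} [Group G] [Group G']

theorem Subgroup.relIndex_sup_ne_zero_of_finite (K N : Subgroup G) [N.Normal] [Finite N] :
    K.relIndex (K ⊔ N) ≠ 0 := by
  have hsurj : Function.Surjective fun n : N =>
      (QuotientGroup.mk ⟨n, mem_sup_right n.2⟩ : ↥(K ⊔ N) ⧸ K.subgroupOf (K ⊔ N)) := by
    rintro ⟨t⟩
    obtain ⟨n, hn, k, hk, hnk⟩ : (t : G) ∈ (N : Set G) * (K : Set G) := by
      rw [← normal_mul, sup_comm]; exact t.2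
    refine ⟨⟨n, hn⟩, QuotientGroup.eq.mpr ?_⟩
    rw [mem_subgroupOf]
    simpa [← hnk] using hk
  have := Finite.of_surjective _ hsurj
  exact index_ne_zero_of_finite

theorem Subgroup.finiteIndex_of_finiteIndex_map {f : G →* G'} [Finite f.ker] {K : Subgroup G}
    (h : (K.map f).FiniteIndex) : K.FiniteIndex := by
  rw [finiteIndex_iff, ← relIndex_mul_index (le_sup_left : K ≤ K ⊔ f.ker)]
  refine mul_ne_zero (K.relIndex_sup_ne_zero_of_finite f.ker) fun h0 => h.index_ne_zero ?_
  rw [index_map, h0, zero_mul]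

theorem Subgroup.finiteIndex_of_forall_pow_mem {Q : Type*} [CommGroup Q] [Group.FG Q]
    {K : Subgroup Q} {n : ℕ} (hn : n ≠ 0) (hK : ∀ q : Q, q ^ n ∈ K) : K.FiniteIndex :=
  have := finiteIndex_range_powMonoidHom_of_fg Q hn
  finiteIndex_of_le (H := (powMonoidHom n).range) (by rintro _ ⟨q, rfl⟩; exact hK q)

end Index

section Products

variable {G Q : Type*} [Group G] [Group Q] {r : ℕ}

theorem map_ofFn_prod_zpow (f : G →* Q) (x : Fin r → G) (v : Fin r → ℤ) :
    f (List.ofFn fun i => x i ^ v i).prod = (List.ofFn fun i => f (x i) ^ v i).prod := by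
  simp only [map_list_prod, List.map_ofFn, Function.comp_def, map_zpow]

theorem ofFn_prod_zpow_mem_closure (x : Fin r → G) (v : Fin r → ℤ) :
    (List.ofFn fun i => x i ^ v i).prod ∈ closure (Set.range x) :=
  list_prod_mem fun _ hy => by
    obtain ⟨i, rfl⟩ := List.mem_ofFn.mp hy
    exact zpow_mem (subset_closure (Set.mem_range_self i)) _

theorem Group.fg_of_surjective_ofFn_prod_zpow {x : Fin r → G}
    (hx : Function.Surjective fun v : Fin r → ℤ => (List.ofFn fun i => x i ^ v i).prod) :
    Group.FG G :=
  Group.fg_iff.mpr ⟨Set.range x, eq_top_iff.mpr fun y _ => by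
    obtain ⟨v, rfl⟩ := hx y
    exact ofFn_prod_zpow_mem_closure x v, Set.finite_range x⟩

theorem injective_ofFn_prod_pow_zpow {x : Fin r → G}
    (hx : Function.Injective fun v : Fin r → ℤ => (List.ofFn fun i => x i ^ v i).prod)
    {n : ℕ} (hn : n ≠ 0) :
    Function.Injective fun v : Fin r → ℤ => (List.ofFn fun i => (x i ^ n) ^ v i).prod := by
  intro v w h
  simp only [← zpow_natCast, ← zpow_mul] at h
  funext i
  exact mul_left_cancel₀ (Int.natCast_ne_zero.mpr hn) (congrFun (hx h) i)

variable {C : Type*} [CommGroup C]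

theorem ofFn_prod_zpow_pow (z : Fin r → C) (v : Fin r → ℤ) (n : ℕ) :
    (List.ofFn fun i => z i ^ v i).prod ^ n = (List.ofFn fun i => (z i ^ n) ^ v i).prod := by
  rw [List.prod_ofFn, List.prod_ofFn, ← Finset.prod_pow]
  exact Finset.prod_congr rfl fun i _ => by rw [← zpow_natCast, ← zpow_natCast, ← zpow_mul,
    ← zpow_mul, mul_comm]

theorem ofFn_prod_zpow_add (f : C →* G) (z : Fin r → C) (v w : Fin r → ℤ) :
    (List.ofFn fun i => f (z i) ^ (v i + w i)).prod =
      (List.ofFn fun i => f (z i) ^ v i).prod * (List.ofFn fun i => f (z i) ^ w i).prod := by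
  rw [← map_ofFn_prod_zpow, ← map_ofFn_prod_zpow, ← map_ofFn_prod_zpow, ← map_mul]
  simp only [List.prod_ofFn, zpow_add, Finset.prod_mul_distrib]

theorem range_ofFn_prod_zpow_eq_closure (f : C →* G) (z : Fin r → C) :
    (Set.range fun v : Fin r → ℤ => (List.ofFn fun i => f (z i) ^ v i).prod) =
      closure (Set.range fun i => f (z i)) := by
  have hC : (Set.range fun v : Fin r → ℤ => ∏ i, z i ^ v i) = closure (Set.range z) := by
    ext y
    simp only [Set.mem_range, SetLike.mem_coe, mem_closure_range_iff_of_fintype, eq_comm]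
  simp only [← map_ofFn_prod_zpow, List.prod_ofFn]
  rw [Set.range_comp' f, hC, ← coe_map, MonoidHom.map_closure, ← Set.range_comp]
  rfl

end Products

section Center

variable {G : Type*} [Group G]

theorem commute_pow_of_conj_eq_mul {a b c : G} {n : ℕ} (hac : Commute a c) (hc : c ^ n = 1)
    (h : b * a * b⁻¹ = a * c) : Commute b (a ^ n) :=
  mul_inv_eq_iff_eq_mul.mp <| by rw [← conj_pow, h, hac.mul_pow, hc, mul_one]

theorem pow_card_mulAut_mem_centralizer (H : Subgroup G) [H.Normal] [Finite H] (x : G) :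
    x ^ Nat.card (MulAut H) ∈ centralizer H := by
  have hconj : MulAut.conjNormal (H := H) (x ^ Nat.card (MulAut H)) = 1 := by
    rw [map_pow, pow_card_eq_one']
  refine mem_centralizer_iff.mpr fun h hh => ?_
  have := congrArg (fun σ : MulAut H => (σ ⟨h, hh⟩ : G)) hconj
  simp only [MulAut.conjNormal_apply, MulAut.one_apply] at this
  exact (mul_inv_eq_iff_eq_mul.mp this).symm

theorem pow_card_mulAut_mul_card_mem_center (H : Subgroup G) [H.Normal] [Finite H]
    (hcomm : ∀ a b : G ⧸ H, a * b = b * a) (x : G) :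
    x ^ (Nat.card (MulAut H) * Nat.card H) ∈ center G := by
  set a := x ^ Nat.card (MulAut H)
  rw [pow_mul, mem_center_iff]
  intro y
  set c := a⁻¹ * (y * a * y⁻¹)
  have hcH : c ∈ H := by
    rw [← QuotientGroup.eq_one_iff]
    simp only [c, QuotientGroup.mk_mul, QuotientGroup.mk_inv]
    rw [hcomm y a]
    group
  have hac : Commute a c := (mem_centralizer_iff.mp (pow_card_mulAut_mem_centralizer H x) c hcH).symm
  have hc : c ^ Nat.card H = 1 := orderOf_dvd_iff_pow_eq_one.mp (H.orderOf_dvd_natCard hcH)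
  exact commute_pow_of_conj_eq_mul hac hc (mul_inv_cancel_left a _).symm

end Center

theorem exists_pow_free_abelian_finiteIndex_general {G : Type*} [Group G]
    (H : Subgroup G) [H.Normal] (hH : (H : Set G).Finite)
    (r : ℕ) (g : Fin r → G)
    (hab : ∀ a b : G ⧸ H, a * b = b * a)
    (hbasis : Function.Bijective fun v : Fin r → ℤ =>
      (List.ofFn fun i => ((g i : G ⧸ H)) ^ v i).prod) :
    ∃ s : ℕ, 0 < s ∧
      (Function.Injective fun v : Fin r → ℤ =>
        (List.ofFn fun i => (g i ^ s) ^ v i).prod) ∧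
      (∀ v w : Fin r → ℤ,
        (List.ofFn fun i => (g i ^ s) ^ (v i + w i)).prod =
          (List.ofFn fun i => (g i ^ s) ^ v i).prod *
            (List.ofFn fun i => (g i ^ s) ^ w i).prod) ∧
      (Set.range fun v : Fin r → ℤ => (List.ofFn fun i => (g i ^ s) ^ v i).prod) =
        (Subgroup.closure (Set.range fun i => g i ^ s) : Set G) ∧
      (Subgroup.closure (Set.range fun i => g i ^ s)).FiniteIndex ∧
      Set.InjOn (QuotientGroup.mk : G → G ⧸ H)
        (Subgroup.closure (Set.range fun i => g i ^ s) : Set G) ∧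
      ((Subgroup.closure (Set.range fun i => g i ^ s)).map
        (QuotientGroup.mk' H)).FiniteIndex := by
  have : Finite H := hH.to_subtype
  set s := Nat.card (MulAut H) * Nat.card H
  have hs : s ≠ 0 := (Nat.mul_pos Nat.card_pos Nat.card_pos).ne'
  let _ : CommGroup (center G) := { mul_comm := fun a b => Subtype.ext (mem_center_iff.mp b.2 a) }
  let z : Fin r → center G := fun i => ⟨g i ^ s, pow_card_mulAut_mul_card_mem_center H hab (g i)⟩
  set G₁ := closure (Set.range fun i => g i ^ s)
  have hrange : (Set.range fun v : Fin r → ℤ => (List.ofFn fun i => (g i ^ s) ^ v i).prod) = G₁ :=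
    range_ofFn_prod_zpow_eq_closure (center G).subtype z
  have hmk : ∀ v : Fin r → ℤ, ((List.ofFn fun i => (g i ^ s) ^ v i).prod : G ⧸ H) =
      (List.ofFn fun i => ((g i : G ⧸ H) ^ s) ^ v i).prod := fun v => by
    simp only [← QuotientGroup.mk'_apply, map_ofFn_prod_zpow, map_pow]
  have hinj : Function.Injective fun v : Fin r → ℤ =>
      ((List.ofFn fun i => (g i ^ s) ^ v i).prod : G ⧸ H) := by
    simpa only [hmk] using injective_ofFn_prod_pow_zpow hbasis.injective hs
  have hKfin : (G₁.map (QuotientGroup.mk' H)).FiniteIndex := by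
    let _ : CommGroup (G ⧸ H) := { mul_comm := hab }
    have := Group.fg_of_surjective_ofFn_prod_zpow hbasis.surjective
    refine finiteIndex_of_forall_pow_mem hs fun q => ?_
    obtain ⟨v, rfl⟩ := hbasis.surjective q
    rw [ofFn_prod_zpow_pow, ← hmk]
    exact mem_map_of_mem _ (hrange.subset (Set.mem_range_self v))
  have : Finite (QuotientGroup.mk' H).ker := by rwa [QuotientGroup.ker_mk']
  refine ⟨s, Nat.pos_of_ne_zero hs, hinj.of_comp, ofFn_prod_zpow_add (center G).subtype z, hrange,
    finiteIndex_of_finiteIndex_map hKfin, ?_, hKfin⟩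
  rw [← hrange]
  rintro _ ⟨v, rfl⟩ _ ⟨w, rfl⟩ h
  rw [hinj h]

/-- Lemma (group-theoretic lemma of the paper). Let `H ⊴ G` be a finite normal
subgroup such that `G ⧸ H = ⟨γ(g₁)⟩ × ⋯ × ⟨γ(g_r)⟩ ≅ ℤ^r` for some `r ≥ 1` and
`gᵢ ∈ G` (expressed by: the quotient is abelian and `v ↦ ∏ γ(gᵢ)^{vᵢ}` is a bijection
from `ℤ^r` onto `G ⧸ H`). Then there is an integer `s > 0` such that
`G₁ := ⟨g₁^s, …, g_r^s⟩` is the internal direct product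
`⟨g₁^s⟩ × ⋯ × ⟨g_r^s⟩ ≅ ℤ^r` (the map `φ : v ↦ ∏ (gᵢ^s)^{vᵢ}` from `ℤ^r` is an
injective homomorphism with image `G₁`), `G₁` has finite index in `G`, and the
quotient map `γ : G → G ⧸ H` restricts to an isomorphism of `G₁` onto a finite-index
subgroup of `G ⧸ H`. -/
theorem exists_pow_free_abelian_finiteIndex {G : Type*} [Group G]
    (H : Subgroup G) [H.Normal] (hH : (H : Set G).Finite)
    (r : ℕ) (hr : 1 ≤ r) (g : Fin r → G)
    (hab : ∀ a b : G ⧸ H, a * b = b * a)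
    (hbasis : Function.Bijective fun v : Fin r → ℤ =>
      (List.ofFn fun i => ((g i : G ⧸ H)) ^ v i).prod) :
    ∃ s : ℕ, 0 < s ∧
      (Function.Injective fun v : Fin r → ℤ =>
        (List.ofFn fun i => (g i ^ s) ^ v i).prod) ∧
      (∀ v w : Fin r → ℤ,
        (List.ofFn fun i => (g i ^ s) ^ (v i + w i)).prod =
          (List.ofFn fun i => (g i ^ s) ^ v i).prod *
            (List.ofFn fun i => (g i ^ s) ^ w i).prod) ∧
      (Set.range fun v : Fin r → ℤ => (List.ofFn fun i => (g i ^ s) ^ v i).prod) =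
        (Subgroup.closure (Set.range fun i => g i ^ s) : Set G) ∧
      (Subgroup.closure (Set.range fun i => g i ^ s)).FiniteIndex ∧
      Set.InjOn (QuotientGroup.mk : G → G ⧸ H)
        (Subgroup.closure (Set.range fun i => g i ^ s) : Set G) ∧
      ((Subgroup.closure (Set.range fun i => g i ^ s)).map
        (QuotientGroup.mk' H)).FiniteIndex :=
  exists_pow_free_abelian_finiteIndex_general H hH r g hab hbasis
end

section
/- Let $G$ be a group and $g_1, g_2 \in G$. If the set of commutators $\{[g_1^t, g_2] : t \in \mathbb{Z}_{>0}\}$ is finite, then there exists an integer $s > 0$ such that $g_1^s$ commutes with $g_2$. -/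
open scoped commutatorElement

/-- Since `⁅x * y, b⁆ = x * ⁅y, b⁆ * x⁻¹ * ⁅x, b⁆`, equal commutators at `m` and `m + d` force
`⁅a ^ d, b⁆ = 1`. -/
theorem commute_pow_sub_of_commutatorElement_pow_eq {G : Type*} [Group G] (a b : G) {m n : ℕ}
    (hmn : m ≤ n) (h : ⁅a ^ m, b⁆ = ⁅a ^ n, b⁆) : Commute (a ^ (n - m)) b := by
  obtain ⟨d, rfl⟩ := Nat.exists_eq_add_of_le hmn
  rw [pow_add, commutatorElement_mul_left_eq_conj_mul] at h
  have hconj : a ^ m * ⁅a ^ d, b⁆ * (a ^ m)⁻¹ = 1 := mul_eq_right.mp h.symm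
  rw [Nat.add_sub_cancel_left, ← commutatorElement_eq_one_iff_commute]
  simpa using hconj

/-- If the set of commutators `⁅g₁^t, g₂⁆` for `t > 0` is finite, then some positive
power of `g₁` commutes with `g₂`. -/
theorem finite_commutators_imp_pow_commute {G : Type*} [Group G] (g₁ g₂ : G)
    (hfin : {x : G | ∃ t : ℕ, 0 < t ∧ x = ⁅g₁ ^ t, g₂⁆}.Finite) :
    ∃ s : ℕ, 0 < s ∧ g₁ ^ s * g₂ = g₂ * g₁ ^ s := by
  obtain ⟨m, n, hmn, heq⟩ := hfin.exists_lt_map_eq_of_forall_mem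
    (f := fun t : ℕ ↦ ⁅g₁ ^ (t + 1), g₂⁆) fun t ↦ by exact ⟨t + 1, t.succ_pos, rfl⟩
  have hcomm := commute_pow_sub_of_commutatorElement_pow_eq g₁ g₂ (by omega) heq
  exact ⟨n + 1 - (m + 1), by omega, hcomm.eq⟩
end

section
/- Let $G$ be a group, $H \trianglelefteq G$ a finite normal subgroup, and $g_1, g_2 \in G$ elements whose images in $G/H$ commute. Then there exists an integer $s > 0$ such that $g_1^s g_2 = g_2 g_1^s$. -/
/-!
The commutators `⁅g₁ ^ n, g₂⁆`, `n ∈ ℕ`, all lie in the finite group `H`, so two of them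
coincide, say for `t < u`. Equal commutators mean equal conjugates of `g₂` by `g₁ ^ t` and by
`g₁ ^ u`, and cancelling the conjugation by `g₁ ^ t` shows that `g₁ ^ (u - t)` commutes with `g₂`.
-/

open scoped commutatorElement

section

variable {G : Type*} [Group G]

theorem commutatorElement_mem_of_commute_mk (H : Subgroup G) [H.Normal] {a b : G}
    (h : Commute (a : G ⧸ H) (b : G ⧸ H)) : ⁅a, b⁆ ∈ H := by
  rw [← QuotientGroup.eq_one_iff, ← QuotientGroup.mk'_apply, map_commutatorElement]
  exact h.commutator_eq

theorem commute_pow_sub_of_commutatorElement_pow_eq_s2 {g x : G} {t u : ℕ} (htu : t ≤ u)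
    (h : ⁅g ^ t, x⁆ = ⁅g ^ u, x⁆) : Commute (g ^ (u - t)) x := by
  obtain ⟨d, rfl⟩ := Nat.exists_eq_add_of_le htu
  have hconj : MulAut.conj (g ^ t) x = MulAut.conj (g ^ t) (MulAut.conj (g ^ d) x) := by
    rw [← MulAut.mul_apply, ← map_mul, ← pow_add, conj_eq_commutatorElement_mul,
      conj_eq_commutatorElement_mul, h]
  rw [Nat.add_sub_cancel_left, ← commutatorElement_eq_one_iff_commute, ← mul_left_inj x,
    one_mul, ← conj_eq_commutatorElement_mul]
  exact ((MulAut.conj (g ^ t)).injective hconj).symm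

theorem exists_pos_pow_commute_of_forall_commutatorElement_mem {g x : G} {S : Set G}
    (hS : S.Finite) (hmem : ∀ n : ℕ, ⁅g ^ n, x⁆ ∈ S) : ∃ s, 0 < s ∧ Commute (g ^ s) x := by
  obtain ⟨t, u, htu, h⟩ := hS.exists_lt_map_eq_of_forall_mem hmem
  exact ⟨u - t, Nat.sub_pos_of_lt htu, commute_pow_sub_of_commutatorElement_pow_eq_s2 htu.le h⟩

end

/-- If `H` is a finite normal subgroup of `G` and the images of `g₁, g₂` in `G ⧸ H`
commute, then some positive power of `g₁` commutes with `g₂`. -/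
theorem pow_commute_of_commute_mod_finite_normal {G : Type*} [Group G]
    (H : Subgroup G) [H.Normal] (hH : (H : Set G).Finite) (g₁ g₂ : G)
    (hcomm : (g₁ : G ⧸ H) * (g₂ : G ⧸ H) = (g₂ : G ⧸ H) * (g₁ : G ⧸ H)) :
    ∃ s : ℕ, 0 < s ∧ g₁ ^ s * g₂ = g₂ * g₁ ^ s := by
  refine exists_pos_pow_commute_of_forall_commutatorElement_mem hH fun n => ?_
  apply commutatorElement_mem_of_commute_mk H
  rw [QuotientGroup.mk_pow]
  exact Commute.pow_left hcomm n
end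

section
/- Let $G$ be a group containing a finite normal subgroup $H \trianglelefteq G$ such that the quotient $G/H$ is free abelian of rank $r \ge 1$ (i.e., $G/H \cong \mathbb{Z}^{\oplus r}$). Then $G$ contains a finite-index subgroup $G_1$ that is free abelian of rank $r$; in other words, every extension of $\mathbb{Z}^{\oplus r}$ by a finite group is virtually $\mathbb{Z}^{\oplus r}$. Moreover, $G_1$ can be chosen so that the quotient map $G \to G/H$ restricts to an isomorphism from $G_1$ onto a finite-index subgroup of $G/H$. -/
/-!
Let `C` be the centralizer of `H`; it has finite index because `H` is finite and normal, and every
commutator lies in `H` because `G ⧸ H` is abelian. For `a ∈ C` the commutator `⁅a, b⁆` commutes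
with `a`, so `⁅a ^ n, b⁆ = ⁅a, b⁆ ^ n = 1` for `n = |H|`. Hence all `N`-th powers in `G` commute,
where `N = [G : C] · |H|`. Lifting the `N`-th powers of a basis of `G ⧸ H ≅ ℤ^r` then gives a
homomorphism `Φ : ℤ^r → G` whose composite with the projection is multiplication by `N`. So `Φ` is
injective, and its image has finite index because `N ℤ^r` does and `H` is finite.
-/

open Subgroup
open scoped commutatorElement

section

variable {G : Type*} [Group G]

theorem Commute.pow_mul_mul_inv_pow_eq_commutatorElement_pow_mul {a b : G}
    (h : Commute a ⁅a, b⁆) (n : ℕ) : a ^ n * b * (a ^ n)⁻¹ = ⁅a, b⁆ ^ n * b := by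
  induction n with
  | zero => simp
  | succ n ih =>
    calc a ^ (n + 1) * b * (a ^ (n + 1))⁻¹ = a * (a ^ n * b * (a ^ n)⁻¹) * a⁻¹ := by group
      _ = a * ⁅a, b⁆ ^ n * a⁻¹ * (a * b * a⁻¹) := by rw [ih]; group
      _ = ⁅a, b⁆ ^ n * (⁅a, b⁆ * b) := by
        rw [(h.pow_right n).eq, mul_inv_cancel_right, commutatorElement_def]; group
      _ = ⁅a, b⁆ ^ (n + 1) * b := by rw [pow_succ, mul_assoc]

theorem Commute.pow_left_of_commutatorElement_pow_eq_one {a b : G} {n : ℕ}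
    (h : Commute a ⁅a, b⁆) (hn : ⁅a, b⁆ ^ n = 1) : Commute (a ^ n) b := by
  have := h.pow_mul_mul_inv_pow_eq_commutatorElement_pow_mul n
  rwa [hn, one_mul, mul_inv_eq_iff_eq_mul] at this

namespace Subgroup

theorem commute_pow_card_of_commutatorElement_mem (H : Subgroup G) [Finite H] {a b : G}
    (ha : a ∈ centralizer (H : Set G)) (hab : ⁅a, b⁆ ∈ H) : Commute (a ^ Nat.card H) b :=
  Commute.pow_left_of_commutatorElement_pow_eq_one (ha _ hab).symm <| by
    simpa only [SubgroupClass.coe_pow, OneMemClass.coe_one] using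
      congrArg ((↑) : H → G) (pow_card_eq_one' (x := (⟨_, hab⟩ : H)))

theorem finiteIndex_centralizer_of_finite (H : Subgroup G) [H.Normal] [Finite H] :
    (centralizer (H : Set G)).FiniteIndex := by
  convert finiteIndex_ker (MulAut.conjNormal : G →* MulAut H)
  ext g
  simp [mem_centralizer_iff, MulEquiv.ext_iff, Subtype.ext_iff, MulAut.conjNormal_apply,
    eq_mul_inv_iff_mul_eq, eq_comm]

theorem exists_commute_pow_pow (H : Subgroup G) [H.Normal] [Finite H]
    (hH : ∀ a b : G, ⁅a, b⁆ ∈ H) : ∃ N ≠ 0, ∀ a b : G, Commute (a ^ N) (b ^ N) := by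
  have := H.finiteIndex_centralizer_of_finite
  refine ⟨(centralizer (H : Set G)).index * Nat.card H,
    mul_ne_zero FiniteIndex.index_ne_zero Nat.card_pos.ne', fun a b => ?_⟩
  simp only [pow_mul]
  exact (H.commute_pow_card_of_commutatorElement_mem (pow_index_mem _ a) (hH _ _)).pow_right _

theorem relIndex_sup_ne_zero_of_finite_s6 (K N : Subgroup G) [N.Normal] [Finite N] :
    K.relIndex (K ⊔ N) ≠ 0 := by
  rw [relIndex, ← finiteIndex_iff, finiteIndex_iff_finite_quotient]
  refine Finite.of_surjective
    (fun n : N => (⟨n, le_sup_right (a := K) n.2⟩ : ↥(K ⊔ N)) : N → _ ⧸ K.subgroupOf (K ⊔ N)) ?_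
  rintro ⟨x, hx⟩
  rw [← SetLike.mem_coe, sup_comm, normal_mul] at hx
  obtain ⟨n, hn, k, hk, rfl⟩ := hx
  refine ⟨⟨n, hn⟩, QuotientGroup.eq.mpr ?_⟩
  simpa [mem_subgroupOf] using hk

theorem finiteIndex_of_finiteIndex_map_s6 {G' : Type*} [Group G'] {f : G →* G'} [Finite f.ker]
    {K : Subgroup G} [(K.map f).FiniteIndex] : K.FiniteIndex := by
  have hsup : (K ⊔ f.ker).index ≠ 0 :=
    left_ne_zero_of_mul (index_map K f ▸ FiniteIndex.index_ne_zero)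
  exact ⟨relIndex_mul_index (le_sup_left : K ≤ K ⊔ f.ker) ▸
    mul_ne_zero (K.relIndex_sup_ne_zero_of_finite_s6 f.ker) hsup⟩

end Subgroup

theorem MonoidHom.exists_comp_eq_powMonoidHom {ι : Type*} [Fintype ι] [DecidableEq ι]
    (ψ : G →* (ι → Multiplicative ℤ)) (hψ : Function.Surjective ψ) {N : ℕ}
    (hN : ∀ a b : G, Commute (a ^ N) (b ^ N)) :
    ∃ Φ : (ι → Multiplicative ℤ) →* G, ψ.comp Φ = powMonoidHom N := by
  choose x hx using fun i => hψ (Pi.mulSingle i (Multiplicative.ofAdd 1))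
  have hcomm : Pairwise fun i j => ∀ m n : Multiplicative ℤ,
      Commute (zpowersHom G (x i ^ N) m) (zpowersHom G (x j ^ N) n) :=
    fun i j _ m n => (hN (x i) (x j)).zpow_zpow _ _
  refine ⟨noncommPiCoprod _ hcomm, ?_⟩
  ext i : 2
  simp [hx]

end

theorem exists_free_abelian_finiteIndex_subgroup_general {G : Type*} [Group G]
    (H : Subgroup G) [H.Normal] (hH : (H : Set G).Finite)
    (r : ℕ)
    (hfree : Nonempty ((G ⧸ H) ≃* Multiplicative (Fin r → ℤ))) :
    ∃ G₁ : Subgroup G, G₁.FiniteIndex ∧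
      Nonempty (G₁ ≃* Multiplicative (Fin r → ℤ)) ∧
      Set.InjOn (QuotientGroup.mk : G → G ⧸ H) (G₁ : Set G) ∧
      (G₁.map (QuotientGroup.mk' H)).FiniteIndex := by
  obtain ⟨e⟩ := hfree
  have hHfin : Finite H := hH.to_subtype
  let e' : G ⧸ H ≃* (Fin r → Multiplicative ℤ) := e.trans (MulEquiv.piMultiplicative _)
  let ψ : G →* (Fin r → Multiplicative ℤ) := (e' : G ⧸ H →* _).comp (QuotientGroup.mk' H)
  have hψ : Function.Surjective ψ := e'.surjective.comp (QuotientGroup.mk'_surjective H)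
  have hker : ψ.ker = H := by ext; simp [ψ]
  have hcomm (a b : G) : ⁅a, b⁆ ∈ H := by
    rw [← hker, MonoidHom.mem_ker, map_commutatorElement, commutatorElement_eq_one_iff_commute]
    exact Commute.all _ _
  obtain ⟨N, hN, hpow⟩ := H.exists_commute_pow_pow hcomm
  obtain ⟨Φ, hΦ⟩ := ψ.exists_comp_eq_powMonoidHom hψ hpow
  have hinj : Function.Injective (ψ.comp Φ) := hΦ ▸ pow_left_injective hN
  have : Finite ψ.ker := hker ▸ hHfin
  have : (Φ.range.map ψ).FiniteIndex := by
    rw [← MonoidHom.range_comp, hΦ]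
    exact finiteIndex_range_powMonoidHom_of_fg _ hN
  have hG₁ : Φ.range.FiniteIndex := finiteIndex_of_finiteIndex_map_s6 (f := ψ)
  have hΦinj : Function.Injective Φ := fun _ _ h => hinj (congrArg ψ h)
  refine ⟨Φ.range, hG₁,
    ⟨(MonoidHom.ofInjective hΦinj).symm.trans (MulEquiv.piMultiplicative _).symm⟩, ?_,
    ⟨ne_zero_of_dvd_ne_zero hG₁.index_ne_zero (index_map_dvd _ (QuotientGroup.mk'_surjective H))⟩⟩
  rintro _ ⟨u, rfl⟩ _ ⟨v, rfl⟩ huv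
  exact congrArg Φ (hinj (congrArg e' huv))

/-- Every extension of `ℤ^r` (`r ≥ 1`) by a finite group is virtually `ℤ^r`: if
`H ⊴ G` is finite and `G ⧸ H` is free abelian of rank `r`, then `G` has a
finite-index subgroup `G₁` that is free abelian of rank `r`, and `G₁` can be chosen
so that the quotient map `G → G ⧸ H` restricts to an isomorphism of `G₁` onto a
finite-index subgroup of `G ⧸ H` (i.e. it is injective on `G₁` and the image of `G₁`
has finite index). -/
theorem exists_free_abelian_finiteIndex_subgroup {G : Type*} [Group G]
    (H : Subgroup G) [H.Normal] (hH : (H : Set G).Finite)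
    (r : ℕ) (hr : 1 ≤ r)
    (hfree : Nonempty ((G ⧸ H) ≃* Multiplicative (Fin r → ℤ))) :
    ∃ G₁ : Subgroup G, G₁.FiniteIndex ∧
      Nonempty (G₁ ≃* Multiplicative (Fin r → ℤ)) ∧
      Set.InjOn (QuotientGroup.mk : G → G ⧸ H) (G₁ : Set G) ∧
      (G₁.map (QuotientGroup.mk' H)).FiniteIndex :=
  exists_free_abelian_finiteIndex_subgroup_general H hH r hfree
end
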